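/- Let d ≥ 1, let X, Y and Z be independent ℝ^d-valued random variables each with density f with respect to Lebesgue measure, let H be an invertible d×d real matrix, let K : ℝ^d → ℝ be bounded, measurable, compactly supported and even (K(−u) = K(u) for all u), and let ρ : ℝ^d → ℝ be bounded, measurable and even (ρ(−u) = ρ(u) for all u). Then for all x, t ∈ ℝ^d, E[K_H(X − x) K_H(Y − x) K_H(X − t) K_H(Z − t) ρ(X − Z) ρ(Y − X)] = |det H|⁻¹ ∫∫∫_{ℝ^d×ℝ^d×ℝ^d} K(p) K(q) K(p + H⁻¹(x − t)) K(r) ρ(H(p − q)) ρ(x − t + H(p − r)) f(x + Hp) f(x + Hq) f(t + Hr) dp dq dr. -/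

import Mathlib

/-!
Independence turns the expectation into an iterated integral against the common law
`f(y) dy` of `X`, `Y`, `Z` (Fubini applies since the integrand is bounded and the laws are
probability measures). The substitutions `u = x + H p`, `v = x + H q`, `w = t + H r` each
produce a Jacobian `|det H|`, against `|det H|⁻⁴` from the four rescaled kernels; evenness of
`ρ` turns `ρ(Y - X)` into `ρ(H(p - q))`.
-/

open MeasureTheory ProbabilityTheory Filter
open scoped ENNReal NNReal Topology

noncomputable section

/-- The rescaled kernel `K_H(v) = |det H|⁻¹ * K (H⁻¹ v)`. -/
def kernelScaled {d : ℕ} (H : Matrix (Fin d) (Fin d) ℝ) (K : (Fin d → ℝ) → ℝ)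
    (v : Fin d → ℝ) : ℝ :=
  |H.det|⁻¹ * K (H⁻¹.mulVec v)

open Matrix

section Independence

variable {Ω E : Type*} [MeasurableSpace Ω] [MeasurableSpace E] {μ : Measure Ω}
  [IsFiniteMeasure μ] {X Y Z : Ω → E}

theorem map_prodMk_prodMk_eq_prod_of_iIndepFun (hX : Measurable X) (hY : Measurable Y)
    (hZ : Measurable Z) (hindep : iIndepFun ![X, Y, Z] μ) :
    μ.map (fun ω => (X ω, Y ω, Z ω)) = (μ.map X).prod ((μ.map Y).prod (μ.map Z)) := by
  have hmeas : ∀ i, Measurable (![X, Y, Z] i) := by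
    intro i; fin_cases i <;> assumption
  have hYZ : μ.map (fun ω => (Y ω, Z ω)) = (μ.map Y).prod (μ.map Z) :=
    (indepFun_iff_map_prod_eq_prod_map_map hY.aemeasurable hZ.aemeasurable).mp
      (hindep.indepFun (show (1 : Fin 3) ≠ 2 by decide))
  rw [← hYZ]
  exact (indepFun_iff_map_prod_eq_prod_map_map hX.aemeasurable
    (hY.prodMk hZ).aemeasurable).mp
    (hindep.indepFun_prodMk hmeas 1 2 0 (by decide) (by decide)).symm

theorem integral_comp_eq_integral_integral_integral_of_iIndepFun {G : Type*}
    [NormedAddCommGroup G] [NormedSpace ℝ G] (hX : Measurable X) (hY : Measurable Y)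
    (hZ : Measurable Z) (hindep : iIndepFun ![X, Y, Z] μ) {g : E × E × E → G}
    (hg : Integrable g ((μ.map X).prod ((μ.map Y).prod (μ.map Z)))) :
    ∫ ω, g (X ω, Y ω, Z ω) ∂μ = ∫ u, ∫ v, ∫ w, g (u, v, w) ∂μ.map Z ∂μ.map Y ∂μ.map X := by
  have hmap := map_prodMk_prodMk_eq_prod_of_iIndepFun hX hY hZ hindep
  rw [← integral_map (hX.prodMk (hY.prodMk hZ)).aemeasurable (hmap ▸ hg.1), hmap,
    integral_prod _ hg]
  refine integral_congr_ae ?_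
  filter_upwards [hg.prod_right_ae] with u hu using integral_prod _ hu

end Independence

section ChangeOfVariables

variable {ι E : Type*} [Fintype ι] [DecidableEq ι] [NormedAddCommGroup E] [NormedSpace ℝ E]
  {H : Matrix ι ι ℝ}

theorem integral_comp_mulVec (hH : H.det ≠ 0) (g : (ι → ℝ) → E) :
    ∫ p, g (H *ᵥ p) = |H.det|⁻¹ • ∫ u, g u := by
  let L := (H.toLinearEquiv' (H.invertibleOfIsUnitDet hH.isUnit)).toContinuousLinearEquiv
  have hL : MeasurableEmbedding L := L.toHomeomorph.measurableEmbedding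
  have hmap : (volume : Measure (ι → ℝ)).map L = ENNReal.ofReal |H.det⁻¹| • volume :=
    Real.map_matrix_volume_pi_eq_smul_volume_pi hH
  calc ∫ p, g (H *ᵥ p) = ∫ p, g (L p) := rfl
    _ = |H.det|⁻¹ • ∫ u, g u := by
      rw [← hL.integral_map, hmap, integral_smul_measure, ENNReal.toReal_ofReal (abs_nonneg _),
        abs_inv]

theorem integral_comp_add_mulVec (hH : H.det ≠ 0) (c : ι → ℝ) (g : (ι → ℝ) → E) :
    ∫ p, g (c + H *ᵥ p) = |H.det|⁻¹ • ∫ u, g u := by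
  rw [integral_comp_mulVec hH (fun u => g (c + u)), integral_add_left_eq_self]

end ChangeOfVariables

theorem integral_withDensity_ofReal {α : Type*} [MeasurableSpace α] {μ : Measure α}
    {f : α → ℝ} (hf : Measurable f) (hf0 : ∀ y, 0 ≤ f y) (g : α → ℝ) :
    ∫ y, g y ∂(μ.withDensity fun y => ENNReal.ofReal (f y)) = ∫ y, f y * g y ∂μ := by
  rw [integral_withDensity_eq_integral_toReal_smul hf.ennreal_ofReal
    (ae_of_all _ fun _ => ENNReal.ofReal_lt_top)]
  simp [ENNReal.toReal_ofReal (hf0 _)]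

section Density

variable {ι : Type*} [Fintype ι] [DecidableEq ι] {f : (ι → ℝ) → ℝ} {ν : Measure (ι → ℝ)}
  {H : Matrix ι ι ℝ}

theorem integral_withDensity_eq_integral_comp_add_mulVec (hf : Measurable f)
    (hf0 : ∀ y, 0 ≤ f y) (hν : ν = volume.withDensity fun y => ENNReal.ofReal (f y))
    (hH : H.det ≠ 0) (c : ι → ℝ) (g : (ι → ℝ) → ℝ) :
    ∫ u, g u ∂ν = |H.det| * ∫ p, f (c + H *ᵥ p) * g (c + H *ᵥ p) := by
  rw [hν, integral_withDensity_ofReal hf hf0, integral_comp_add_mulVec hH c (fun u => f u * g u),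
    smul_eq_mul, mul_inv_cancel_left₀ (abs_ne_zero.mpr hH)]

theorem integral_integral_integral_withDensity_eq_comp_add_mulVec (hf : Measurable f)
    (hf0 : ∀ y, 0 ≤ f y) (hν : ν = volume.withDensity fun y => ENNReal.ofReal (f y))
    (hH : H.det ≠ 0) (a b c : ι → ℝ) (g : (ι → ℝ) → (ι → ℝ) → (ι → ℝ) → ℝ) :
    ∫ u, ∫ v, ∫ w, g u v w ∂ν ∂ν ∂ν =
      |H.det| ^ 3 * ∫ p, ∫ q, ∫ r, f (a + H *ᵥ p) * f (b + H *ᵥ q) * f (c + H *ᵥ r) *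
        g (a + H *ᵥ p) (b + H *ᵥ q) (c + H *ᵥ r) := by
  have hcov := integral_withDensity_eq_integral_comp_add_mulVec hf hf0 hν hH
  have hw : ∀ u v, ∫ w, g u v w ∂ν = |H.det| * ∫ r, f (c + H *ᵥ r) * g u v (c + H *ᵥ r) :=
    fun u v => hcov c _
  have hvw : ∀ u, ∫ v, ∫ w, g u v w ∂ν ∂ν = |H.det| ^ 2 * ∫ q, ∫ r,
      f (b + H *ᵥ q) * f (c + H *ᵥ r) * g u (b + H *ᵥ q) (c + H *ᵥ r) := by
    intro u
    simp only [hw, hcov b, ← integral_const_mul, mul_assoc, mul_left_comm _ |H.det|, pow_two]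
  rw [hcov a]
  simp only [hvw, ← integral_const_mul, mul_assoc, mul_left_comm _ |H.det|, pow_succ, pow_zero,
    one_mul]

end Density

section Kernel

variable {d : ℕ} {H : Matrix (Fin d) (Fin d) ℝ} {K ρ : (Fin d → ℝ) → ℝ}

theorem measurable_kernelScaled (hK : Measurable K) : Measurable (kernelScaled H K) :=
  (hK.comp (H⁻¹.mulVecLin.continuous_of_finiteDimensional.measurable)).const_mul _

theorem abs_kernelScaled_le {C : ℝ} (hK : ∀ u, |K u| ≤ C) (v : Fin d → ℝ) :
    |kernelScaled H K v| ≤ |H.det|⁻¹ * C := by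
  rw [kernelScaled, abs_mul, abs_inv, abs_abs]
  exact mul_le_mul_of_nonneg_left (hK _) (by positivity)

theorem kernelScaled_mulVec_add (hH : H.det ≠ 0) (p v : Fin d → ℝ) :
    kernelScaled H K (H *ᵥ p + v) = |H.det|⁻¹ * K (p + H⁻¹ *ᵥ v) := by
  rw [kernelScaled, mulVec_add, mulVec_mulVec, nonsing_inv_mul _ hH.isUnit, one_mulVec]

theorem kernelScaled_mulVec (hH : H.det ≠ 0) (p : Fin d → ℝ) :
    kernelScaled H K (H *ᵥ p) = |H.det|⁻¹ * K p := by
  simpa using kernelScaled_mulVec_add (K := K) hH p 0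

def integrandW6 (H : Matrix (Fin d) (Fin d) ℝ) (K ρ : (Fin d → ℝ) → ℝ) (x t : Fin d → ℝ)
    (z : (Fin d → ℝ) × (Fin d → ℝ) × (Fin d → ℝ)) : ℝ :=
  kernelScaled H K (z.1 - x) * kernelScaled H K (z.2.1 - x) * kernelScaled H K (z.1 - t) *
    kernelScaled H K (z.2.2 - t) * ρ (z.1 - z.2.2) * ρ (z.2.1 - z.1)

theorem measurable_integrandW6 (hK : Measurable K) (hρ : Measurable ρ) (x t : Fin d → ℝ) :
    Measurable (integrandW6 H K ρ x t) := by
  have := measurable_kernelScaled (H := H) hK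
  unfold integrandW6
  fun_prop

theorem norm_integrandW6_le {CK Cρ : ℝ} (hK : ∀ u, |K u| ≤ CK) (hρ : ∀ u, |ρ u| ≤ Cρ)
    (x t : Fin d → ℝ) (z : (Fin d → ℝ) × (Fin d → ℝ) × (Fin d → ℝ)) :
    ‖integrandW6 H K ρ x t z‖ ≤ (|H.det|⁻¹ * CK) ^ 4 * Cρ ^ 2 := by
  have hk := abs_kernelScaled_le (H := H) hK
  have hCK : 0 ≤ |H.det|⁻¹ * CK := (abs_nonneg _).trans (hk 0)
  have hCρ : 0 ≤ Cρ := (abs_nonneg _).trans (hρ 0)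
  calc ‖integrandW6 H K ρ x t z‖
      = |kernelScaled H K (z.1 - x)| * |kernelScaled H K (z.2.1 - x)| *
          |kernelScaled H K (z.1 - t)| * |kernelScaled H K (z.2.2 - t)| *
          |ρ (z.1 - z.2.2)| * |ρ (z.2.1 - z.1)| := by
        simp only [integrandW6, Real.norm_eq_abs, abs_mul]
    _ ≤ (|H.det|⁻¹ * CK) * (|H.det|⁻¹ * CK) * (|H.det|⁻¹ * CK) * (|H.det|⁻¹ * CK) * Cρ * Cρ := by
        gcongr <;> first | exact hk _ | exact hρ _
    _ = (|H.det|⁻¹ * CK) ^ 4 * Cρ ^ 2 := by ring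

theorem integrandW6_add_mulVec (hH : H.det ≠ 0) (hρ : ∀ u, ρ (-u) = ρ u) (x t p q r : Fin d → ℝ) :
    integrandW6 H K ρ x t (x + H *ᵥ p, x + H *ᵥ q, t + H *ᵥ r) =
      |H.det|⁻¹ ^ 4 * (K p * K q * K (p + H⁻¹ *ᵥ (x - t)) * K r *
        ρ (H *ᵥ (p - q)) * ρ (x - t + H *ᵥ (p - r))) := by
  have h1 : x + H *ᵥ p - t = H *ᵥ p + (x - t) := by abel
  have h2 : x + H *ᵥ p - (t + H *ᵥ r) = x - t + H *ᵥ (p - r) := by rw [mulVec_sub]; abel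
  have h3 : x + H *ᵥ q - (x + H *ᵥ p) = -(H *ᵥ (p - q)) := by rw [mulVec_sub]; abel
  simp only [integrandW6, add_sub_cancel_left, h1, h2, h3, hρ, kernelScaled_mulVec hH,
    kernelScaled_mulVec_add hH]
  ring

end Kernel

theorem expectation_W6n_general {d : ℕ}
    {Ω : Type*} [MeasurableSpace Ω] (μ : Measure Ω) [IsProbabilityMeasure μ]
    (X Y Z : Ω → (Fin d → ℝ))
    (hXmeas : Measurable X) (hYmeas : Measurable Y) (hZmeas : Measurable Z)
    (hindep : iIndepFun ![X, Y, Z] μ)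
    (f : (Fin d → ℝ) → ℝ) (hfmeas : Measurable f) (hfnonneg : ∀ y, 0 ≤ f y)
    (hlawX : μ.map X = volume.withDensity (fun y => ENNReal.ofReal (f y)))
    (hlawY : μ.map Y = volume.withDensity (fun y => ENNReal.ofReal (f y)))
    (hlawZ : μ.map Z = volume.withDensity (fun y => ENNReal.ofReal (f y)))
    (H : Matrix (Fin d) (Fin d) ℝ) (hH : H.det ≠ 0)
    (K : (Fin d → ℝ) → ℝ) (hKmeas : Measurable K) (hKbd : ∃ C, ∀ u, |K u| ≤ C)
    (ρ : (Fin d → ℝ) → ℝ) (hρmeas : Measurable ρ) (hρbd : ∃ C, ∀ u, |ρ u| ≤ C)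
    (hρeven : ∀ u, ρ (-u) = ρ u)
    (x t : Fin d → ℝ) :
    ∫ ω, kernelScaled H K (X ω - x) * kernelScaled H K (Y ω - x) *
        kernelScaled H K (X ω - t) * kernelScaled H K (Z ω - t) *
        ρ (X ω - Z ω) * ρ (Y ω - X ω) ∂μ =
      |H.det|⁻¹ *
        ∫ p, ∫ q, ∫ r, K p * K q * K (p + H⁻¹.mulVec (x - t)) * K r *
          ρ (H.mulVec (p - q)) * ρ (x - t + H.mulVec (p - r)) *
          f (x + H.mulVec p) * f (x + H.mulVec q) * f (t + H.mulVec r) := by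
  obtain ⟨CK, hCK⟩ := hKbd
  obtain ⟨Cρ, hCρ⟩ := hρbd
  set ν := volume.withDensity fun y => ENNReal.ofReal (f y)
  have : IsProbabilityMeasure ν := hlawX ▸ Measure.isProbabilityMeasure_map hXmeas.aemeasurable
  have hint : Integrable (integrandW6 H K ρ x t) ((μ.map X).prod ((μ.map Y).prod (μ.map Z))) := by
    rw [hlawX, hlawY, hlawZ]
    exact .of_bound (measurable_integrandW6 hKmeas hρmeas x t).aestronglyMeasurable _
      (ae_of_all _ (norm_integrandW6_le hCK hCρ x t))
  have hpt : ∀ p q r, f (x + H *ᵥ p) * f (x + H *ᵥ q) * f (t + H *ᵥ r) *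
      integrandW6 H K ρ x t (x + H *ᵥ p, x + H *ᵥ q, t + H *ᵥ r) =
      |H.det|⁻¹ ^ 4 * (K p * K q * K (p + H⁻¹ *ᵥ (x - t)) * K r * ρ (H *ᵥ (p - q)) *
        ρ (x - t + H *ᵥ (p - r)) * f (x + H *ᵥ p) * f (x + H *ᵥ q) * f (t + H *ᵥ r)) := by
    intro p q r
    rw [integrandW6_add_mulVec hH hρeven]
    ring
  calc _ = ∫ u, ∫ v, ∫ w, integrandW6 H K ρ x t (u, v, w) ∂μ.map Z ∂μ.map Y ∂μ.map X :=
        integral_comp_eq_integral_integral_integral_of_iIndepFun hXmeas hYmeas hZmeas hindep hint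
    _ = _ := by
        rw [hlawX, hlawY, hlawZ,
          integral_integral_integral_withDensity_eq_comp_add_mulVec hfmeas hfnonneg rfl hH x x t]
        simp only [hpt, integral_const_mul]
        rw [← mul_assoc]
        congr 1
        field_simp

/-- Expectation computation in Lemma 6:
`E[K_H(X−x) K_H(Y−x) K_H(X−t) K_H(Z−t) ρ(X−Z) ρ(Y−X)]
  = |det H|⁻¹ ∫∫∫ K(p) K(q) K(p+H⁻¹(x−t)) K(r) ρ(H(p−q)) ρ(x−t+H(p−r))
      f(x+Hp) f(x+Hq) f(t+Hr) dp dq dr`. -/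
theorem expectation_W6n {d : ℕ} (hd : 1 ≤ d)
    {Ω : Type*} [MeasurableSpace Ω] (μ : Measure Ω) [IsProbabilityMeasure μ]
    (X Y Z : Ω → (Fin d → ℝ))
    (hXmeas : Measurable X) (hYmeas : Measurable Y) (hZmeas : Measurable Z)
    (hindep : iIndepFun ![X, Y, Z] μ)
    (f : (Fin d → ℝ) → ℝ) (hfmeas : Measurable f) (hfnonneg : ∀ y, 0 ≤ f y)
    (hlawX : μ.map X = volume.withDensity (fun y => ENNReal.ofReal (f y)))
    (hlawY : μ.map Y = volume.withDensity (fun y => ENNReal.ofReal (f y)))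
    (hlawZ : μ.map Z = volume.withDensity (fun y => ENNReal.ofReal (f y)))
    (H : Matrix (Fin d) (Fin d) ℝ) (hH : H.det ≠ 0)
    (K : (Fin d → ℝ) → ℝ) (hKmeas : Measurable K) (hKbd : ∃ C, ∀ u, |K u| ≤ C)
    (hKsupp : HasCompactSupport K) (hKeven : ∀ u, K (-u) = K u)
    (ρ : (Fin d → ℝ) → ℝ) (hρmeas : Measurable ρ) (hρbd : ∃ C, ∀ u, |ρ u| ≤ C)
    (hρeven : ∀ u, ρ (-u) = ρ u)
    (x t : Fin d → ℝ) :
    ∫ ω, kernelScaled H K (X ω - x) * kernelScaled H K (Y ω - x) *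
        kernelScaled H K (X ω - t) * kernelScaled H K (Z ω - t) *
        ρ (X ω - Z ω) * ρ (Y ω - X ω) ∂μ =
      |H.det|⁻¹ *
        ∫ p, ∫ q, ∫ r, K p * K q * K (p + H⁻¹.mulVec (x - t)) * K r *
          ρ (H.mulVec (p - q)) * ρ (x - t + H.mulVec (p - r)) *
          f (x + H.mulVec p) * f (x + H.mulVec q) * f (t + H.mulVec r) :=
  expectation_W6n_general μ X Y Z hXmeas hYmeas hZmeas hindep f hfmeas hfnonneg hlawX hlawY hlawZ H
    hH K hKmeas hKbd ρ hρmeas hρbd hρeven x t
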